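/- Let X be a geodesic metric space in which geodesics between points are unique, and suppose every geodesic triangle with one vertex equal to a fixed point c ∈ X satisfies the CAT(0) comparison inequality. Then any local geodesic γ : [0,1] → X with γ(0) = c is a (global) geodesic. -/

import Mathlib

/-- A geodesic of speed `σ`, parameterized by `[0,1]`. -/
def IsGeodesicSpeed {X : Type*} [MetricSpace X] (γ : ℝ → X) (σ : ℝ) : Prop :=
  ∀ s ∈ Set.Icc (0:ℝ) 1, ∀ t ∈ Set.Icc (0:ℝ) 1,
    dist (γ s) (γ t) = σ * |s - t|

/-- A geodesic parameterized proportionally to arclength by `[0,1]`. -/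
def IsGeodesic {X : Type*} [MetricSpace X] (γ : ℝ → X) : Prop :=
  IsGeodesicSpeed γ (dist (γ 0) (γ 1))

/-- A local geodesic of speed `σ`: around each parameter it restricts to a geodesic
of speed `σ`. -/
def IsLocalGeodesicSpeed {X : Type*} [MetricSpace X] (γ : ℝ → X) (σ : ℝ) : Prop :=
  ∀ u ∈ Set.Icc (0:ℝ) 1, ∃ ε > 0,
    ∀ s ∈ Set.Icc (0:ℝ) 1 ∩ Set.Icc (u - ε) (u + ε),
      ∀ t ∈ Set.Icc (0:ℝ) 1 ∩ Set.Icc (u - ε) (u + ε),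
        dist (γ s) (γ t) = σ * |s - t|

/-!
Let `T` be a parameter up to which `γ` is already a geodesic of speed `σ`, and let `η` be small
enough that `γ` is a geodesic on `[T - η, T + η]`. In the triangle with vertices `c`, `γ T` and
`γ (T + η)` the points `γ (T - η)` and `γ (T + η)` are at distance `2ση`; the CAT(0) inequality
makes the corresponding points of the comparison triangle at least that far apart, which is only
possible when the comparison triangle is degenerate, i.e. `d(c, γ (T + η)) = σ (T + η)`. Then `γ`
is a geodesic on `[0, T + η]`. A Lebesgue number for the local geodesic condition makes the step
`η` uniform, so finitely many steps reach `1`.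
-/

open Set Metric

theorem add_le_norm_of_two_mul_le_norm_sub {w : ℂ} {a b : ℝ} (hb : 0 ≤ b) (hwa : ‖w - a‖ = b)
    (h : 2 * b ≤ ‖w - (a - b : ℝ)‖) : a + b ≤ ‖w‖ := by
  -- `‖w - (a - b)‖ ^ 2 = 2 * b ^ 2 + 2 * b * (w.re - a)`, so `a + b ≤ w.re`.
  have hsq : ∀ r : ℝ, ‖w - r‖ ^ 2 = (w.re - r) ^ 2 + w.im ^ 2 := fun r => by
    rw [Complex.sq_norm, Complex.normSq_apply]
    simp only [Complex.sub_re, Complex.sub_im, Complex.ofReal_re, Complex.ofReal_im, sub_zero]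
    ring
  have hwa2 := hsq a
  have hwab2 := hsq (a - b)
  rw [hwa] at hwa2
  have h2 : (2 * b) ^ 2 ≤ ‖w - (a - b : ℝ)‖ ^ 2 := pow_le_pow_left₀ (by positivity) h 2
  have hre : a + b ≤ w.re := by nlinarith [sq_nonneg w.im]
  exact hre.trans (Complex.re_le_norm w)

section

variable {X : Type*} [MetricSpace X]

def IsGeodesicSpeedOn (γ : ℝ → X) (σ : ℝ) (I : Set ℝ) : Prop :=
  ∀ s ∈ I, ∀ t ∈ I, dist (γ s) (γ t) = σ * |s - t|

namespace IsGeodesicSpeedOn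

variable {γ : ℝ → X} {σ : ℝ} {I : Set ℝ}

theorem mono {J : Set ℝ} (h : IsGeodesicSpeedOn γ σ I) (hJ : J ⊆ I) :
    IsGeodesicSpeedOn γ σ J :=
  fun s hs t ht => h s (hJ hs) t (hJ ht)

theorem dist_eq_of_le (h : IsGeodesicSpeedOn γ σ I) {s t : ℝ} (hs : s ∈ I) (ht : t ∈ I)
    (hst : s ≤ t) : dist (γ s) (γ t) = σ * (t - s) := by
  rw [h s hs t ht, abs_sub_comm, abs_of_nonneg (sub_nonneg.2 hst)]

theorem isGeodesic_comp_affine {a b : ℝ} (h : IsGeodesicSpeedOn γ σ (Icc a b)) (hab : a ≤ b) :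
    IsGeodesic (fun u => γ (a + (b - a) * u)) := by
  have hmem : ∀ u ∈ Icc (0 : ℝ) 1, a + (b - a) * u ∈ Icc a b := fun u hu =>
    ⟨by nlinarith [hu.1], by nlinarith [hu.2]⟩
  intro s hs t ht
  simp only [mul_zero, add_zero, mul_one, add_sub_cancel]
  rw [h _ (hmem s hs) _ (hmem t ht),
    h.dist_eq_of_le (left_mem_Icc.2 hab) (right_mem_Icc.2 hab) hab, add_sub_add_left_eq_sub,
    ← mul_sub, abs_mul, abs_of_nonneg (sub_nonneg.2 hab), mul_assoc]

end IsGeodesicSpeedOn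

theorem isGeodesicSpeedOn_Icc_of_dist_le {γ : ℝ → X} {σ a b : ℝ}
    (hle : ∀ s ∈ Icc a b, ∀ t ∈ Icc a b, s ≤ t → dist (γ s) (γ t) ≤ σ * (t - s))
    (hend : σ * (b - a) ≤ dist (γ a) (γ b)) : IsGeodesicSpeedOn γ σ (Icc a b) := by
  suffices ∀ s ∈ Icc a b, ∀ t ∈ Icc a b, s ≤ t → dist (γ s) (γ t) = σ * (t - s) by
    intro s hs t ht
    rcases le_total s t with hst | hts
    · rw [this s hs t ht hst, abs_sub_comm, abs_of_nonneg (sub_nonneg.2 hst)]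
    · rw [dist_comm, this t ht s hs hts, abs_of_nonneg (sub_nonneg.2 hts)]
  intro s hs t ht hst
  have ha : a ∈ Icc a b := left_mem_Icc.2 (hs.1.trans hs.2)
  have hb : b ∈ Icc a b := right_mem_Icc.2 (hs.1.trans hs.2)
  have hchain : dist (γ a) (γ b) ≤ dist (γ a) (γ s) + dist (γ s) (γ t) + dist (γ t) (γ b) :=
    dist_triangle4 _ _ _ _
  have has := hle a ha s hs hs.1
  have htb := hle t ht b hb ht.2
  exact le_antisymm (hle s hs t ht hst) (by nlinarith)

theorem IsGeodesicSpeedOn.union_Icc {γ : ℝ → X} {σ a b b' c : ℝ}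
    (h₁ : IsGeodesicSpeedOn γ σ (Icc a b)) (h₂ : IsGeodesicSpeedOn γ σ (Icc b' c))
    (hb' : b' ≤ b) (hbc : b ≤ c) (hend : σ * (c - a) ≤ dist (γ a) (γ c)) :
    IsGeodesicSpeedOn γ σ (Icc a c) := by
  refine isGeodesicSpeedOn_Icc_of_dist_le (fun s hs t ht hst => ?_) hend
  by_cases htb : t ≤ b
  · exact (h₁.dist_eq_of_le ⟨hs.1, hst.trans htb⟩ ⟨hs.1.trans hst, htb⟩ hst).le
  by_cases hbs : b' ≤ s
  · exact (h₂.dist_eq_of_le ⟨hbs, hst.trans ht.2⟩ ⟨hbs.trans hst, ht.2⟩ hst).le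
  rw [not_le] at htb hbs
  have hab : a ≤ b := by linarith [hs.1]
  calc dist (γ s) (γ t) ≤ dist (γ s) (γ b) + dist (γ b) (γ t) := dist_triangle _ _ _
    _ = σ * (b - s) + σ * (t - b) := by
      rw [h₁.dist_eq_of_le ⟨hs.1, by linarith⟩ ⟨hab, le_rfl⟩ (by linarith),
        h₂.dist_eq_of_le ⟨hb', hbc⟩ ⟨by linarith, ht.2⟩ htb.le]
    _ = σ * (t - s) := by ring

theorem IsLocalGeodesicSpeed.exists_uniform_radius {γ : ℝ → X} {σ : ℝ}
    (h : IsLocalGeodesicSpeed γ σ) :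
    ∃ δ > 0, ∀ u ∈ Icc (0 : ℝ) 1, IsGeodesicSpeedOn γ σ (Icc 0 1 ∩ Icc (u - δ) (u + δ)) := by
  choose! ε hε hγ using h
  obtain ⟨δ, hδ, hball⟩ :=
    lebesgue_number_lemma_of_metric (c := fun v : Icc (0 : ℝ) 1 => ball v.1 (ε v)) isCompact_Icc
      (fun _ => isOpen_ball) fun u hu => mem_iUnion.2 ⟨⟨u, hu⟩, mem_ball_self (hε u hu)⟩
  refine ⟨δ / 2, half_pos hδ, fun u hu => ?_⟩
  obtain ⟨⟨v, hv⟩, hsub⟩ := hball u hu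
  have hIcc : Icc (u - δ / 2) (u + δ / 2) ⊆ Icc (v - ε v) (v + ε v) := by
    rw [← Real.closedBall_eq_Icc, ← Real.closedBall_eq_Icc]
    exact (closedBall_subset_ball (half_lt_self hδ)).trans (hsub.trans ball_subset_closedBall)
  exact IsGeodesicSpeedOn.mono (hγ v hv) (inter_subset_inter_right _ hIcc)

theorem exists_complex_comparison_triangle (x y z : X) :
    ∃ w : ℂ, ‖w‖ = dist x z ∧ ‖w - dist x y‖ = dist y z := by
  rcases eq_or_ne x y with rfl | hxy
  · exact ⟨dist x z, by simp, by simp⟩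
  set a := dist x y
  set b := dist y z
  set L := dist x z
  have ha : 0 < a := dist_pos.2 hxy
  -- the abscissa of the third vertex, by the law of cosines
  set p := (a ^ 2 + L ^ 2 - b ^ 2) / (2 * a) with hp
  have hpa : 2 * a * p = a ^ 2 + L ^ 2 - b ^ 2 := by rw [hp]; field_simp
  have hp2 : p ^ 2 ≤ L ^ 2 := by
    have h₁ : L ≤ a + b := dist_triangle x y z
    have h₂ : a ≤ L + b := (dist_triangle x z y).trans_eq (by rw [dist_comm z y])
    have h₃ : b ≤ a + L := (dist_triangle y x z).trans_eq (by rw [dist_comm y x])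
    have h₄ : (2 * a) ^ 2 * p ^ 2 ≤ (2 * a) ^ 2 * L ^ 2 := by
      rw [← mul_pow, hpa]
      nlinarith [mul_nonneg (mul_nonneg (sub_nonneg.2 h₁) (sub_nonneg.2 h₂))
        (mul_nonneg (sub_nonneg.2 h₃) (by positivity : 0 ≤ a + b + L))]
    exact le_of_mul_le_mul_left h₄ (by positivity)
  refine ⟨⟨p, √(L ^ 2 - p ^ 2)⟩, ?_, ?_⟩
  all_goals
    rw [← sq_eq_sq₀ (norm_nonneg _) dist_nonneg, Complex.sq_norm, Complex.normSq_apply]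
    simp only [Complex.sub_re, Complex.sub_im, Complex.ofReal_re, Complex.ofReal_im, sub_zero]
    nlinarith [Real.mul_self_sqrt (sub_nonneg.2 hp2)]

def IsCAT0At (c : X) : Prop :=
  ∀ γ₁ γ₂ γ₃ : ℝ → X, IsGeodesic γ₁ → IsGeodesic γ₂ → IsGeodesic γ₃ →
      γ₁ 0 = c → γ₂ 0 = c → γ₃ 0 = γ₁ 1 → γ₃ 1 = γ₂ 1 →
      ∀ x' y' z' : ℂ,
        dist x' y' = dist c (γ₁ 1) → dist x' z' = dist c (γ₂ 1) →
        dist y' z' = dist (γ₁ 1) (γ₂ 1) →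
        ∀ s ∈ Icc (0 : ℝ) 1, ∀ t ∈ Icc (0 : ℝ) 1,
          dist (γ₁ s) (γ₂ t) ≤ dist (x' + s • (y' - x')) (x' + t • (z' - x')) ∧
          dist (γ₁ s) (γ₃ t) ≤ dist (x' + s • (y' - x')) (y' + t • (z' - y')) ∧
          dist (γ₂ s) (γ₃ t) ≤ dist (x' + s • (z' - x')) (y' + t • (z' - y'))

theorem IsCAT0At.le_dist_of_isGeodesicSpeedOn {c : X}
    (hcat : IsCAT0At c) (hgeo : ∀ x y : X, ∃ γ : ℝ → X, γ 0 = x ∧ γ 1 = y ∧ IsGeodesic γ)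
    {γ : ℝ → X} {σ T η : ℝ} (hσ : 0 ≤ σ) (hη : 0 < η) (hηT : η ≤ T) (hγ0 : γ 0 = c)
    (h₁ : IsGeodesicSpeedOn γ σ (Icc 0 T)) (h₂ : IsGeodesicSpeedOn γ σ (Icc (T - η) (T + η))) :
    σ * (T + η) ≤ dist c (γ (T + η)) := by
  have hT : 0 < T := hη.trans_le hηT
  have h₃ : IsGeodesicSpeedOn γ σ (Icc T (T + η)) := h₂.mono (Icc_subset_Icc_left (by linarith))
  have hcy : dist c (γ T) = σ * T := by
    rw [← hγ0, h₁.dist_eq_of_le (left_mem_Icc.2 hT.le) (right_mem_Icc.2 hT.le) hT.le, sub_zero]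
  have hyz : dist (γ T) (γ (T + η)) = σ * η := by
    rw [h₃.dist_eq_of_le (left_mem_Icc.2 (by linarith)) (right_mem_Icc.2 (by linarith))
      (by linarith), add_sub_cancel_left]
  have hxz : dist (γ (T - η)) (γ (T + η)) = 2 * (σ * η) := by
    rw [h₂.dist_eq_of_le (left_mem_Icc.2 (by linarith)) (right_mem_Icc.2 (by linarith))
      (by linarith)]
    ring
  obtain ⟨γ₂, hγ₂0, hγ₂1, hγ₂⟩ := hgeo c (γ (T + η))
  have hγ₁ : IsGeodesic fun u => γ (T * u) := by simpa using h₁.isGeodesic_comp_affine hT.le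
  have hγ₃ : IsGeodesic fun u => γ (T + η * u) := by
    simpa using h₃.isGeodesic_comp_affine (by linarith)
  obtain ⟨w, hw, hwy⟩ := exists_complex_comparison_triangle c (γ T) (γ (T + η))
  rw [hcy, hyz] at hwy
  have hs : (T - η) / T ∈ Icc (0 : ℝ) 1 :=
    ⟨div_nonneg (by linarith) hT.le, (div_le_one hT).2 (by linarith)⟩
  -- The comparison point of `γ (T - η)` is `σ (T - η)`, at distance `ση` from the vertex `σ T`;
  -- being `2ση` away from `w` forces the comparison triangle to be degenerate.
  have hcmp := (hcat _ γ₂ _ hγ₁ hγ₂ hγ₃ (by simpa using hγ0) hγ₂0 (by simp) (by simp [hγ₂1])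
    0 (σ * T : ℝ) w (by simp [hcy, abs_of_nonneg hσ, abs_of_pos hT]) (by simp [hw, hγ₂1])
    (by simp [hγ₂1, hyz, ← hwy, dist_eq_norm, norm_sub_rev]) _ hs 1
    (right_mem_Icc.2 zero_le_one)).2.1
  have hpt : (0 : ℂ) + ((T - η) / T) • (((σ * T : ℝ) : ℂ) - 0) = ((σ * T - σ * η : ℝ) : ℂ) := by
    rw [Complex.real_smul, sub_zero, zero_add, ← Complex.ofReal_mul]
    congr 1
    field_simp
  have hT' : T * ((T - η) / T) = T - η := by field_simp
  simp only [hT', mul_one, hpt, one_smul, add_sub_cancel, hxz, dist_comm _ w, Complex.dist_eq]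
    at hcmp
  rw [mul_add, ← hw]
  exact add_le_norm_of_two_mul_le_norm_sub (by positivity) hwy hcmp

theorem IsCAT0At.isGeodesicSpeedOn_Icc_add {c : X}
    (hcat : IsCAT0At c) (hgeo : ∀ x y : X, ∃ γ : ℝ → X, γ 0 = x ∧ γ 1 = y ∧ IsGeodesic γ)
    {γ : ℝ → X} {σ T η : ℝ} (hσ : 0 ≤ σ) (hη : 0 < η) (hηT : η ≤ T) (hγ0 : γ 0 = c)
    (h₁ : IsGeodesicSpeedOn γ σ (Icc 0 T)) (h₂ : IsGeodesicSpeedOn γ σ (Icc (T - η) (T + η))) :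
    IsGeodesicSpeedOn γ σ (Icc 0 (T + η)) :=
  h₁.union_Icc h₂ (by linarith) (by linarith) <| by
    simpa [hγ0] using hcat.le_dist_of_isGeodesicSpeedOn hgeo hσ hη hηT hγ0 h₁ h₂

end

theorem local_geodesic_from_vertex_is_geodesic_general {X : Type*} [MetricSpace X] (c : X)
    (hgeo : ∀ x y : X, ∃ γ : ℝ → X, γ 0 = x ∧ γ 1 = y ∧ IsGeodesic γ)
    (hcat : ∀ γ₁ γ₂ γ₃ : ℝ → X, IsGeodesic γ₁ → IsGeodesic γ₂ → IsGeodesic γ₃ →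
      γ₁ 0 = c → γ₂ 0 = c → γ₃ 0 = γ₁ 1 → γ₃ 1 = γ₂ 1 →
      ∀ x' y' z' : ℂ,
        dist x' y' = dist c (γ₁ 1) → dist x' z' = dist c (γ₂ 1) →
        dist y' z' = dist (γ₁ 1) (γ₂ 1) →
        ∀ s ∈ Set.Icc (0:ℝ) 1, ∀ t ∈ Set.Icc (0:ℝ) 1,
          dist (γ₁ s) (γ₂ t) ≤ dist (x' + s • (y' - x')) (x' + t • (z' - x')) ∧
          dist (γ₁ s) (γ₃ t) ≤ dist (x' + s • (y' - x')) (y' + t • (z' - y')) ∧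
          dist (γ₂ s) (γ₃ t) ≤ dist (x' + s • (z' - x')) (y' + t • (z' - y')))
    (γ : ℝ → X) (σ : ℝ) (hσ : 0 ≤ σ)
    (hloc : IsLocalGeodesicSpeed γ σ) (hγ0 : γ 0 = c) :
    IsGeodesicSpeed γ σ := by
  obtain ⟨δ, hδ, hδγ⟩ := hloc.exists_uniform_radius
  have hshort : ∀ T ∈ Icc (0 : ℝ) 1, T ≤ δ → IsGeodesicSpeedOn γ σ (Icc 0 T) := fun T hT hTδ =>
    (hδγ 0 (left_mem_Icc.2 zero_le_one)).mono fun s hs =>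
      ⟨⟨hs.1, hs.2.trans hT.2⟩, by linarith [hs.1], by linarith [hs.2]⟩
  have hsteps : ∀ n : ℕ, ∀ T ∈ Icc (0 : ℝ) 1, T ≤ n * (δ / 2) →
      IsGeodesicSpeedOn γ σ (Icc 0 T) := by
    intro n
    induction n with
    | zero => exact fun T hT hTn => hshort T hT (by simp at hTn; linarith)
    | succ n ih =>
      intro T hT hTn
      by_cases hTδ : T ≤ δ
      · exact hshort T hT hTδ
      have hT₀ : T - δ / 2 ∈ Icc (0 : ℝ) 1 := ⟨by linarith, by linarith [hT.2]⟩
      have hwindow : Icc (T - δ / 2 - δ / 2) (T - δ / 2 + δ / 2) ⊆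
          Icc 0 1 ∩ Icc (T - δ / 2 - δ) (T - δ / 2 + δ) := fun s hs =>
        ⟨⟨by linarith [hs.1], by linarith [hs.2, hT.2]⟩, by linarith [hs.1], by linarith [hs.2]⟩
      simpa using IsCAT0At.isGeodesicSpeedOn_Icc_add hcat hgeo hσ (half_pos hδ) (by linarith) hγ0
        (ih _ hT₀ (by push_cast at hTn; linarith)) ((hδγ _ hT₀).mono hwindow)
  obtain ⟨n, hn⟩ := exists_nat_ge (1 / (δ / 2))
  exact hsteps n 1 (right_mem_Icc.2 zero_le_one) ((div_le_iff₀ (half_pos hδ)).1 hn)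

/-- in a uniquely geodesic space in which every geodesic triangle
with one vertex at `c` satisfies the CAT(0) comparison inequality (with Euclidean
comparison triangles, here modeled in `ℂ`), every local geodesic starting at `c`
is a global geodesic. -/
theorem local_geodesic_from_vertex_is_geodesic {X : Type*} [MetricSpace X] (c : X)
    (hgeo : ∀ x y : X, ∃ γ : ℝ → X, γ 0 = x ∧ γ 1 = y ∧ IsGeodesic γ)
    (huniq : ∀ γ γ' : ℝ → X, IsGeodesic γ → IsGeodesic γ' →
      γ 0 = γ' 0 → γ 1 = γ' 1 → Set.EqOn γ γ' (Set.Icc 0 1))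
    (hcat : ∀ γ₁ γ₂ γ₃ : ℝ → X, IsGeodesic γ₁ → IsGeodesic γ₂ → IsGeodesic γ₃ →
      γ₁ 0 = c → γ₂ 0 = c → γ₃ 0 = γ₁ 1 → γ₃ 1 = γ₂ 1 →
      ∀ x' y' z' : ℂ,
        dist x' y' = dist c (γ₁ 1) → dist x' z' = dist c (γ₂ 1) →
        dist y' z' = dist (γ₁ 1) (γ₂ 1) →
        ∀ s ∈ Set.Icc (0:ℝ) 1, ∀ t ∈ Set.Icc (0:ℝ) 1,
          dist (γ₁ s) (γ₂ t) ≤ dist (x' + s • (y' - x')) (x' + t • (z' - x')) ∧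
          dist (γ₁ s) (γ₃ t) ≤ dist (x' + s • (y' - x')) (y' + t • (z' - y')) ∧
          dist (γ₂ s) (γ₃ t) ≤ dist (x' + s • (z' - x')) (y' + t • (z' - y')))
    (γ : ℝ → X) (σ : ℝ) (hσ : 0 ≤ σ)
    (hloc : IsLocalGeodesicSpeed γ σ) (hγ0 : γ 0 = c) :
    IsGeodesicSpeed γ σ :=
  local_geodesic_from_vertex_is_geodesic_general c hgeo hcat γ σ hσ hloc hγ0
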